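/- arXiv:2302.05175 — 7 statements merged into one kernel-verified Lean document; each statement's English description precedes it below -/
import Mathlib

section
/- Let 𝔤 be a (right) Leibniz algebra over a field F, let d be a derivation of 𝔤 and D an anti-derivation of 𝔤. Then the linear map D ∘ d − d ∘ D is an anti-derivation of 𝔤. -/
/-- A derivation of a Leibniz algebra with bracket `br`. -/
def IsLeibnizDerivation {K g : Type*} [Field K] [AddCommGroup g] [Module K g]
    (br : g →ₗ[K] g →ₗ[K] g) (d : g →ₗ[K] g) : Prop :=
  ∀ x y : g, d (br x y) = br (d x) y + br x (d y)

/-- An anti-derivation of a Leibniz algebra with bracket `br`. -/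
def IsLeibnizAntiDerivation {K g : Type*} [Field K] [AddCommGroup g] [Module K g]
    (br : g →ₗ[K] g →ₗ[K] g) (D : g →ₗ[K] g) : Prop :=
  ∀ x y : g, D (br x y) = br (D x) y - br (D y) x

/-- If `d` is a derivation and `D` an anti-derivation of a
(right) Leibniz algebra `𝔤`, then `D ∘ d − d ∘ D` is an anti-derivation. -/
theorem antiDerivation_comm_derivation
    (K g : Type*) [Field K] [AddCommGroup g] [Module K g]
    (br : g →ₗ[K] g →ₗ[K] g)
    (leib : ∀ x y z : g, br (br x y) z = br (br x z) y + br x (br y z))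
    (d D : g →ₗ[K] g)
    (hd : IsLeibnizDerivation br d)
    (hD : IsLeibnizAntiDerivation br D) :
    IsLeibnizAntiDerivation br (D ∘ₗ d - d ∘ₗ D) := by
  intro x y
  simp only [LinearMap.sub_apply, LinearMap.comp_apply, map_sub,
    hd x y, hD x y, map_add, hD (d x) y, hD x (d y), hd (D x) y, hd (D y) x,
    LinearMap.map_sub, LinearMap.sub_apply]
  abel
end

section
/- Let 𝔤 be a (right) Leibniz algebra over a field F. The set Bider(𝔤) of biderivations of 𝔤 is closed under the bracket [(d,D),(d',D')] = (d∘d' − d'∘d, D∘d' − d'∘D) (i.e., if (d,D) and (d',D') are biderivations then so is (d∘d' − d'∘d, D∘d' − d'∘D)), and this bracket satisfies the right Leibniz identity, so Bider(𝔤) is itself a (right) Leibniz algebra. -/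
/-- A biderivation of a Leibniz algebra with bracket `br`: a pair `(d, D)`
where `d` is a derivation, `D` is an anti-derivation and `[x, d y] = [x, D y]`. -/
def IsBiderivation {K g : Type*} [Field K] [AddCommGroup g] [Module K g]
    (br : g →ₗ[K] g →ₗ[K] g) (p : (g →ₗ[K] g) × (g →ₗ[K] g)) : Prop :=
  IsLeibnizDerivation br p.1 ∧ IsLeibnizAntiDerivation br p.2 ∧
    ∀ x y : g, br x (p.1 y) = br x (p.2 y)

/-- The bracket `[(d,D),(d',D')] = (d∘d' − d'∘d, D∘d' − d'∘D)` on pairs of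
linear endomorphisms. -/
def biderBracket {K g : Type*} [Field K] [AddCommGroup g] [Module K g]
    (p q : (g →ₗ[K] g) × (g →ₗ[K] g)) : (g →ₗ[K] g) × (g →ₗ[K] g) :=
  (p.1 ∘ₗ q.1 - q.1 ∘ₗ p.1, p.2 ∘ₗ q.1 - q.1 ∘ₗ p.2)

/-- For a (right) Leibniz algebra `𝔤`, the set `Bider(𝔤)` of
biderivations is closed under the bracket
`[(d,D),(d',D')] = (d∘d' − d'∘d, D∘d' − d'∘D)`, and this bracket satisfies the
right Leibniz identity, so `Bider(𝔤)` is itself a (right) Leibniz algebra. -/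
theorem bider_leibniz_algebra
    (K g : Type*) [Field K] [AddCommGroup g] [Module K g]
    (br : g →ₗ[K] g →ₗ[K] g)
    (leib : ∀ x y z : g, br (br x y) z = br (br x z) y + br x (br y z)) :
    (∀ p q : (g →ₗ[K] g) × (g →ₗ[K] g),
      IsBiderivation br p → IsBiderivation br q →
      IsBiderivation br (biderBracket p q)) ∧
    (∀ p q r : (g →ₗ[K] g) × (g →ₗ[K] g),
      IsBiderivation br p → IsBiderivation br q → IsBiderivation br r →
      biderBracket (biderBracket p q) r =
        biderBracket (biderBracket p r) q + biderBracket p (biderBracket q r)) := by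
  constructor
  · rintro p q ⟨hd, hD, hc⟩ ⟨hd', hD', hc'⟩
    simp only [IsLeibnizDerivation] at hd hd'
    simp only [IsLeibnizAntiDerivation] at hD hD'
    refine ⟨?_, ?_, ?_⟩
    · intro x y
      simp only [biderBracket, LinearMap.sub_apply, LinearMap.comp_apply,
        hd, hd', map_add, map_sub, LinearMap.add_apply, LinearMap.sub_apply]
      abel
    · intro x y
      simp only [biderBracket, LinearMap.sub_apply, LinearMap.comp_apply,
        hd, hD, hd', map_add, map_sub, LinearMap.add_apply, LinearMap.sub_apply]
      abel
    · intro x y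
      have key : ∀ z w, br z (q.1 (p.1 w)) = br z (q.1 (p.2 w)) := by
        intro z w
        have h1 := hd' z (p.1 w - p.2 w)
        have h2 : br z (p.1 w - p.2 w) = 0 := by
          simp [map_sub, hc]
        have h3 : br (q.1 z) (p.1 w - p.2 w) = 0 := by
          simp [map_sub, hc]
        rw [h2, h3, map_zero, map_sub, zero_add, map_sub] at h1
        have := h1.symm
        rw [sub_eq_zero] at this
        exact this
      simp only [biderBracket, LinearMap.sub_apply, LinearMap.comp_apply,
        map_sub, hc _ (q.1 y), key]
  · intro p q r _ _ _
    refine Prod.ext ?_ ?_ <;>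
    · apply LinearMap.ext; intro x
      simp only [biderBracket, Prod.fst_add, Prod.snd_add, LinearMap.sub_apply,
        LinearMap.add_apply, LinearMap.comp_apply, map_sub, map_add]
      abel
end

section
/- Let 𝔤 and 𝔥 be (right) Leibniz algebras over a field F and let l : 𝔤 × 𝔥 → 𝔥 and r : 𝔥 × 𝔤 → 𝔥 be bilinear maps; write l_x = l(x,−) and r_y = r(−,y). Define on the direct sum 𝔤 ⊕ 𝔥 the bilinear bracket [(x,a),(y,b)] = ([x,y], [a,b] + l_x(b) + r_y(a)). Then this bracket satisfies the right Leibniz identity (i.e., 𝔤 ⊕ 𝔥 is a Leibniz algebra, the semidirect product 𝔤 ⋉ 𝔥) if and only if for all x,y ∈ 𝔤 and a,b ∈ 𝔥: (L1) r_x([a,b]) = [r_x(a),b] + [a,r_x(b)]; (L2) l_x([a,b]) = [l_x(a),b] − [l_x(b),a]; (L3) [a, r_x(b) + l_x(b)] = 0; (L4) r_{[x,y]} = r_y ∘ r_x − r_x ∘ r_y; (L5) l_{[x,y]} = r_y ∘ l_x − l_x ∘ r_y; (L6) l_x ∘ (l_y + r_y) = 0. -/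
/-- Semidirect-product criterion for Leibniz algebras. Given
Leibniz algebras `𝔤, 𝔥` and bilinear maps `l : 𝔤 × 𝔥 → 𝔥` (encoded as
`l x b = l_x(b)`) and `r : 𝔥 × 𝔤 → 𝔥` (encoded as `r x a = r_x(a)`), the
bracket `[(x,a),(y,b)] = ([x,y], [a,b] + l_x(b) + r_y(a))` on `𝔤 ⊕ 𝔥`
satisfies the right Leibniz identity if and only if conditions (L1)–(L6) hold. -/
theorem leibniz_semidirect_iff
    (K g h : Type*) [Field K] [AddCommGroup g] [Module K g]
    [AddCommGroup h] [Module K h]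
    (brg : g →ₗ[K] g →ₗ[K] g) (brh : h →ₗ[K] h →ₗ[K] h)
    (leibg : ∀ x y z : g, brg (brg x y) z = brg (brg x z) y + brg x (brg y z))
    (leibh : ∀ x y z : h, brh (brh x y) z = brh (brh x z) y + brh x (brh y z))
    (l r : g →ₗ[K] h →ₗ[K] h)
    (bb : g × h → g × h → g × h)
    (hbb : ∀ u v : g × h,
      bb u v = (brg u.1 v.1, brh u.2 v.2 + l u.1 v.2 + r v.1 u.2)) :
    (∀ u v w : g × h, bb (bb u v) w = bb (bb u w) v + bb u (bb v w)) ↔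
    ((∀ (x : g) (a b : h), r x (brh a b) = brh (r x a) b + brh a (r x b)) ∧
     (∀ (x : g) (a b : h), l x (brh a b) = brh (l x a) b - brh (l x b) a) ∧
     (∀ (x : g) (a b : h), brh a (r x b + l x b) = 0) ∧
     (∀ (x y : g) (a : h), r (brg x y) a = r y (r x a) - r x (r y a)) ∧
     (∀ (x y : g) (a : h), l (brg x y) a = r y (l x a) - l x (r y a)) ∧
     (∀ (x y : g) (a : h), l x (l y a + r y a) = 0)) := by
  constructor
  · intro H
    have h1 := fun (x : g) (a b : h) => H (0,a) (0,b) (x,0)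
    simp [hbb, Prod.ext_iff] at h1
    have h2 := fun (x : g) (a b : h) => H (x,0) (0,a) (0,b)
    simp [hbb, Prod.ext_iff] at h2
    have h3 := fun (x : g) (a b : h) => H (0,a) (x,0) (0,b)
    simp [hbb, Prod.ext_iff] at h3
    have h4 := fun (x y : g) (a : h) => H (0,a) (x,0) (y,0)
    simp [hbb, Prod.ext_iff] at h4
    have h5 := fun (x y : g) (a : h) => H (x,0) (y,0) (0,a)
    simp [hbb, Prod.ext_iff] at h5
    have h6 := fun (x y : g) (a : h) => H (x,0) (0,a) (y,0)
    simp [hbb, Prod.ext_iff] at h6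
    refine ⟨h1, ?_, ?_, ?_, ?_, ?_⟩
    · intro x a b
      exact eq_sub_of_add_eq' (h2 x a b).symm
    · intro x a b
      rw [map_add]
      have e1 := h1 x a b
      rw [h3 x a b, add_assoc] at e1
      rw [add_comm]
      exact left_eq_add.mp e1
    · intro x y a
      exact eq_sub_of_add_eq' (h4 x y a).symm
    · intro x y a
      exact eq_sub_of_add_eq (h6 x y a).symm
    · intro x y a
      rw [map_add]
      have e6 := h6 x y a
      rw [h5 x y a, add_assoc] at e6
      exact left_eq_add.mp e6
  · rintro ⟨L1, L2, L3, L4, L5, L6⟩ ⟨x,a⟩ ⟨y,b⟩ ⟨z,c⟩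
    simp only [hbb, map_add, LinearMap.add_apply, Prod.mk_add_mk, Prod.mk.injEq]
    refine ⟨leibg x y z, ?_⟩
    have e6 : l x (l y c) = - l x (r y c) := by
      have := L6 x y c; rw [map_add] at this; exact eq_neg_of_add_eq_zero_left this
    have e3 : brh a (l y c) = - brh a (r y c) := by
      have := L3 y a c; rw [map_add] at this; exact eq_neg_of_add_eq_zero_right this
    rw [leibh a b c, L5 x y c, L5 x z b, L1 z a b, L1 y a c, L2 x b c, L4 y z a, e6, e3]
    abel
end

section
/- Let 𝔤 and 𝔥 be (right) Leibniz algebras over a field F and let l : 𝔤 × 𝔥 → 𝔥, r : 𝔥 × 𝔤 → 𝔥 be bilinear maps satisfying conditions (L1)–(L6). Then for every x ∈ 𝔤 the pair (−r_x, l_x) is a biderivation of 𝔥, and the linear map φ : 𝔤 → Bider(𝔥) defined by φ(x) = (−r_x, l_x) is a Leibniz algebra morphism: φ([x,y]) = [φ(x), φ(y)] for all x,y ∈ 𝔤, where the bracket on Bider(𝔥) is [(d,D),(d',D')] = (d∘d' − d'∘d, D∘d' − d'∘D). -/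
/-- If bilinear maps `l : 𝔤 × 𝔥 → 𝔥` and `r : 𝔥 × 𝔤 → 𝔥`
(encoded as `l x b = l_x(b)`, `r x a = r_x(a)`) satisfy (L1)–(L6), then for
every `x ∈ 𝔤` the pair `(−r_x, l_x)` is a biderivation of `𝔥`, and the linear
map `φ : 𝔤 → Bider(𝔥)`, `φ(x) = (−r_x, l_x)`, is a Leibniz algebra morphism:
`φ([x,y]) = [φ(x), φ(y)]`. -/
theorem derived_action_gives_bider_morphism
    (K g h : Type*) [Field K] [AddCommGroup g] [Module K g]
    [AddCommGroup h] [Module K h]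
    (brg : g →ₗ[K] g →ₗ[K] g) (brh : h →ₗ[K] h →ₗ[K] h)
    (leibg : ∀ x y z : g, brg (brg x y) z = brg (brg x z) y + brg x (brg y z))
    (leibh : ∀ x y z : h, brh (brh x y) z = brh (brh x z) y + brh x (brh y z))
    (l r : g →ₗ[K] h →ₗ[K] h)
    (hL1 : ∀ (x : g) (a b : h), r x (brh a b) = brh (r x a) b + brh a (r x b))
    (hL2 : ∀ (x : g) (a b : h), l x (brh a b) = brh (l x a) b - brh (l x b) a)
    (hL3 : ∀ (x : g) (a b : h), brh a (r x b + l x b) = 0)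
    (hL4 : ∀ (x y : g) (a : h), r (brg x y) a = r y (r x a) - r x (r y a))
    (hL5 : ∀ (x y : g) (a : h), l (brg x y) a = r y (l x a) - l x (r y a))
    (hL6 : ∀ (x y : g) (a : h), l x (l y a + r y a) = 0) :
    (∀ x : g, IsBiderivation brh (-(r x), l x)) ∧
    (∀ x y : g, ((-(r (brg x y)), l (brg x y)) : (h →ₗ[K] h) × (h →ₗ[K] h)) =
      biderBracket (-(r x), l x) (-(r y), l y)) := by
  constructor
  · intro x
    refine ⟨?_, ?_, ?_⟩
    · intro a b
      simp only [LinearMap.neg_apply, hL1, map_add, map_neg, neg_add]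
    · intro a b
      exact hL2 x a b
    · intro a b
      have := hL3 x a b
      simp only [map_add] at this
      simp only [LinearMap.neg_apply, map_neg]
      rw [neg_eq_iff_eq_neg]
      exact eq_neg_of_add_eq_zero_left this
  · intro x y
    unfold biderBracket
    refine Prod.ext ?_ ?_
    · ext a
      simp only [LinearMap.neg_apply, LinearMap.sub_apply, LinearMap.comp_apply, hL4,
        map_neg, neg_neg]
      abel
    · ext a
      simp only [LinearMap.sub_apply, LinearMap.comp_apply, LinearMap.neg_apply, hL5,
        map_neg]
      abel
end

section
/- Let 𝔤 and 𝔥 be (right) Leibniz algebras over a field F, and suppose given bilinear maps providing for each x ∈ 𝔤 a biderivation (⟦−,x⟧, ⟦x,−⟧) of 𝔥, such that the resulting linear map φ : 𝔤 → Bider(𝔥), φ(x) = (⟦−,x⟧, ⟦x,−⟧), preserves brackets: (⟦−,[x,y]⟧, ⟦[x,y],−⟧) = [(⟦−,x⟧,⟦x,−⟧), (⟦−,y⟧,⟦y,−⟧)] for all x,y ∈ 𝔤, where the bracket on pairs is [(d,D),(d',D')] = (d∘d' − d'∘d, D∘d' − d'∘D). Define on 𝔤 ⊕ 𝔥 the bracket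 [(x,a),(y,b)]_φ = ([x,y], [a,b] + ⟦x,b⟧ − ⟦a,y⟧). Then this bracket satisfies the right Leibniz identity if and only if ⟦x, ⟦y,a⟧ − ⟦a,y⟧⟧ = 0 for all x,y ∈ 𝔤 and a ∈ 𝔥. -/
/-- Let `𝔤, 𝔥` be (right) Leibniz algebras and suppose each
`x ∈ 𝔤` yields a biderivation `(⟦−,x⟧, ⟦x,−⟧)` of `𝔥` (encoded as
`(R x, L x)` with `R x a = ⟦a,x⟧` and `L x a = ⟦x,a⟧`) such that
`x ↦ (R x, L x)` preserves brackets. Then the bracket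
`[(x,a),(y,b)]_φ = ([x,y], [a,b] + ⟦x,b⟧ − ⟦a,y⟧)` on `𝔤 ⊕ 𝔥` satisfies the
right Leibniz identity iff `⟦x, ⟦y,a⟧ − ⟦a,y⟧⟧ = 0` for all `x, y, a`. -/
theorem bider_morphism_gives_semidirect_iff
    (K g h : Type*) [Field K] [AddCommGroup g] [Module K g]
    [AddCommGroup h] [Module K h]
    (brg : g →ₗ[K] g →ₗ[K] g) (brh : h →ₗ[K] h →ₗ[K] h)
    (leibg : ∀ x y z : g, brg (brg x y) z = brg (brg x z) y + brg x (brg y z))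
    (leibh : ∀ x y z : h, brh (brh x y) z = brh (brh x z) y + brh x (brh y z))
    (R L : g →ₗ[K] h →ₗ[K] h)
    (hbider : ∀ x : g, IsBiderivation brh (R x, L x))
    (hmorph : ∀ x y : g, ((R (brg x y), L (brg x y)) : (h →ₗ[K] h) × (h →ₗ[K] h)) =
      biderBracket (R x, L x) (R y, L y))
    (bb : g × h → g × h → g × h)
    (hbb : ∀ u v : g × h,
      bb u v = (brg u.1 v.1, brh u.2 v.2 + L u.1 v.2 - R v.1 u.2)) :
    (∀ u v w : g × h, bb (bb u v) w = bb (bb u w) v + bb u (bb v w)) ↔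
    (∀ (x y : g) (a : h), L x (L y a - R y a) = 0) := by
  have hR : ∀ x y : g, R (brg x y) = R x ∘ₗ R y - R y ∘ₗ R x :=
    fun x y => congrArg Prod.fst (hmorph x y)
  have hLm : ∀ x y : g, L (brg x y) = L x ∘ₗ R y - R y ∘ₗ L x :=
    fun x y => congrArg Prod.snd (hmorph x y)
  have hd : ∀ (z : g) (a b : h), R z (brh a b) = brh (R z a) b + brh a (R z b) :=
    fun z => (hbider z).1
  have ha : ∀ (z : g) (a b : h), L z (brh a b) = brh (L z a) b - brh (L z b) a :=
    fun z => (hbider z).2.1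
  have hc : ∀ (z : g) (a b : h), brh a (R z b) = brh a (L z b) :=
    by intro z a b; have := (hbider z).2.2 a b; simpa using this
  constructor
  · intro H x y a
    have h1 := H (x, 0) (y, 0) (0, a)
    simp only [hbb, Prod.mk_add_mk, Prod.mk.injEq, map_zero, LinearMap.zero_apply,
      add_zero, zero_add, sub_zero, zero_sub, hLm, LinearMap.sub_apply,
      LinearMap.comp_apply] at h1
    rw [map_sub, sub_eq_zero]
    have h2 := h1.2
    rw [sub_eq_iff_eq_add] at h2
    rw [h2]
    abel
  · intro H u v w
    obtain ⟨x, a⟩ := u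
    obtain ⟨y, b⟩ := v
    obtain ⟨z, c⟩ := w
    have key : ∀ (x y : g) (c : h), L x (L y c) = L x (R y c) := by
      intro x y c
      have h3 := H x y c
      rw [map_sub, sub_eq_zero] at h3
      exact h3
    simp only [hbb, Prod.mk_add_mk, Prod.mk.injEq]
    constructor
    · exact leibg x y z
    · simp only [map_add, map_sub, hLm, hR, LinearMap.sub_apply, LinearMap.comp_apply,
        hd, ha, hc, key, LinearMap.add_apply]
      rw [leibh a b c]
      abel
end

section
/- Let F be a field. On the space M₂(F)³ of triples of 2×2 matrices, the bilinear bracket [(A,B,C),(A',B',C')] = (AC' − C'A, BC' − C'B, CC' − C'C) is not skew-symmetric: there exist u, v ∈ M₂(F)³ with [u,v] ≠ −[v,u]. In particular this bracket is not a Lie bracket, so [V] is not a Poisson algebra when V = F² is the two-dimensional abelian Poisson algebra (with x·y = 0 and [x,y] = 0 for all x,y). -/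
/-- For any field `K`, on `M₂(K)³` the bilinear bracket
`[(A,B,C),(A',B',C')] = (AC' − C'A, BC' − C'B, CC' − C'C)` is not
skew-symmetric: there exist `u, v` with `[u,v] ≠ −[v,u]`. -/
theorem brV_bracket_not_skew
    (K : Type*) [Field K]
    (bb : (Matrix (Fin 2) (Fin 2) K × Matrix (Fin 2) (Fin 2) K × Matrix (Fin 2) (Fin 2) K) →
          (Matrix (Fin 2) (Fin 2) K × Matrix (Fin 2) (Fin 2) K × Matrix (Fin 2) (Fin 2) K) →
          (Matrix (Fin 2) (Fin 2) K × Matrix (Fin 2) (Fin 2) K × Matrix (Fin 2) (Fin 2) K))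
    (hbb : ∀ u v, bb u v =
      (u.1 * v.2.2 - v.2.2 * u.1, u.2.1 * v.2.2 - v.2.2 * u.2.1,
        u.2.2 * v.2.2 - v.2.2 * u.2.2)) :
    ∃ u v, bb u v ≠ -bb v u := by
  refine ⟨(Matrix.single 0 0 1, 0, 0), (0, 0, Matrix.single 0 1 1), ?_⟩
  rw [hbb, hbb]
  intro h
  have h1 := congrArg Prod.fst h
  simp at h1
  have h2 := congrArg (fun M : Matrix (Fin 2) (Fin 2) K => M 0 1) h1
  simp [Matrix.mul_apply, Fin.sum_univ_two, Matrix.single] at h2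
end

section
/- Let F be a field and let V = F². On the space End_F(V) × End_F(V), the bilinear multiplication (f,d)·(f',d') = (f∘f', f∘d' + f'∘d) is not commutative: there exist elements u, v with u·v ≠ v·u. In particular, for V = F² the two-dimensional abelian commutative Poisson algebra (with x·y = 0 and [x,y] = 0 for all x,y), the algebra [V]_c is not a commutative Poisson algebra. -/
/-- For a field `K` and `V = K²`, on `End(V) × End(V)` the
multiplication `(f,d)·(f',d') = (f∘f', f∘d' + f'∘d)` is not commutative:
there exist `u, v` with `u·v ≠ v·u`. In particular, for the two-dimensional
abelian commutative Poisson algebra `V = K²`, the algebra `[V]_c` is not a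
commutative Poisson algebra. -/
theorem brVc_not_commutative
    (K : Type*) [Field K]
    (mul : ((K × K) →ₗ[K] (K × K)) × ((K × K) →ₗ[K] (K × K)) →
           ((K × K) →ₗ[K] (K × K)) × ((K × K) →ₗ[K] (K × K)) →
           ((K × K) →ₗ[K] (K × K)) × ((K × K) →ₗ[K] (K × K)))
    (hmul : ∀ u v, mul u v = (u.1 ∘ₗ v.1, u.1 ∘ₗ v.2 + v.1 ∘ₗ u.2)) :
    ∃ u v, mul u v ≠ mul v u := by
  -- f swaps coordinates, g projects to the first coordinate
  set f : (K × K) →ₗ[K] (K × K) :=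
    LinearMap.prod (LinearMap.snd K K K) (LinearMap.fst K K K) with hf
  set g : (K × K) →ₗ[K] (K × K) :=
    LinearMap.prod (LinearMap.fst K K K) 0 with hg
  refine ⟨(f, 0), (g, 0), fun h => ?_⟩
  rw [hmul, hmul] at h
  have h1 := congrArg (fun p => p.1 ((0 : K), (1 : K))) h
  simp [hf, hg, LinearMap.comp_apply] at h1
end
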